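/- Let (K,ν) be a valued field and ω a value transcendental extension of ν to K(x) with minimal pair of definition (a,γ); let Q ∈ K[x] be the minimal polynomial of a over K and ω̄ = ν̄_{a,γ} the corresponding common extension of ω and ν̄ to K̄(x). Then the value group of ω is the internal direct sum ωK(x) = ν̄K(a) ⊕ ℤ·ωQ, and the residue field of ω satisfies K(x)ω = K(a)ν̄. -/

import Mathlib

/- ---------------------------------------------------------------------------
Common definitions for formalizing "Minimal pairs, minimal fields and
implicit constant fields" (Dutta).

Valuations are formalized additively, as `AddValuation F (WithTop Γ)` where
`Γ` is a linearly ordered abelian group; the value `⊤` plays the role of the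
value `∞` of `0`.  The algebraic closure `K̄` of `K` is `AlgebraicClosure K`,
the rational function field `K(x)` is `RatFunc K`, and a fixed algebraic
closure of `K̄(x)` (equivalently, of `K(x)`) is
`Lhat K := AlgebraicClosure (RatFunc (AlgebraicClosure K))`.
--------------------------------------------------------------------------- -/

noncomputable section

open Polynomial

namespace VT

/-- The canonical embedding of the rational function field `K(x)` into `K̄(x)`. -/
def liftRF (K : Type) [Field K] : RatFunc K →+* RatFunc (AlgebraicClosure K) :=
  RatFunc.mapRingHom (Polynomial.mapRingHom (algebraMap K (AlgebraicClosure K)))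
    (by
      intro p hp
      simp only [Submonoid.mem_comap, Polynomial.coe_mapRingHom]
      rw [mem_nonZeroDivisors_iff_ne_zero] at hp ⊢
      rw [Ne, Polynomial.map_eq_zero_iff (algebraMap K (AlgebraicClosure K)).injective]
      exact hp)

variable {K : Type} [Field K] {Γ : Type} [AddCommGroup Γ] [LinearOrder Γ] [IsOrderedAddMonoid Γ]

/-- `w` extends the valuation `v` along the field embedding `g`. -/
def Extends {A B : Type} [Field A] [Field B] (g : A →+* B)
    (v : AddValuation A (WithTop Γ)) (w : AddValuation B (WithTop Γ)) : Prop :=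
  ∀ x, w (g x) = v x

/-- `W` is the monomial valuation `ν̄_{a,γ}` on `K̄(x)` attached to `a ∈ K̄` and `γ ∈ Γ`:
on a polynomial `p = Σᵢ cᵢ (x-a)ⁱ` its value is `minᵢ (ν̄ cᵢ + iγ)`.  (A valuation on
`K̄(x)` is determined by its restriction to polynomials.)  In particular `W` extends
the valuation `ν̄ = vbar` of `K̄`. -/
def IsMonomialVal (vbar : AddValuation (AlgebraicClosure K) (WithTop Γ))
    (W : AddValuation (RatFunc (AlgebraicClosure K)) (WithTop Γ))
    (a : AlgebraicClosure K) (γ : Γ) : Prop :=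
  ∀ p : Polynomial (AlgebraicClosure K),
    W (algebraMap (Polynomial (AlgebraicClosure K)) (RatFunc (AlgebraicClosure K)) p) =
      (Finset.range (p.natDegree + 1)).inf
        (fun i => vbar ((Polynomial.taylor a p).coeff i) + i • (γ : WithTop Γ))

/-- The degree `[K(a):K]` of an element `a` of the algebraic closure of `K`. -/
def degOver (K : Type) [Field K] (a : AlgebraicClosure K) : ℕ := (minpoly K a).natDegree

/-- `(a,γ)` is a pair of definition for the valuation `ω` on `K(x)`:  some common
extension of `ω` and `ν̄ = vbar` to `K̄(x)` is the monomial valuation `ν̄_{a,γ}`. -/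
def IsPairOfDef (vbar : AddValuation (AlgebraicClosure K) (WithTop Γ))
    (ω : AddValuation (RatFunc K) (WithTop Γ)) (a : AlgebraicClosure K) (γ : Γ) : Prop :=
  ∃ W : AddValuation (RatFunc (AlgebraicClosure K)) (WithTop Γ),
    IsMonomialVal vbar W a γ ∧ Extends (liftRF K) ω W

/-- `(a,γ)` is a minimal pair of definition for `ω`. -/
def IsMinimalPairOfDef (vbar : AddValuation (AlgebraicClosure K) (WithTop Γ))
    (ω : AddValuation (RatFunc K) (WithTop Γ)) (a : AlgebraicClosure K) (γ : Γ) : Prop :=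
  IsPairOfDef vbar ω a γ ∧
    ∀ b : AlgebraicClosure K, (γ : WithTop Γ) ≤ vbar (a - b) → degOver K a ≤ degOver K b

/-- `(a,γ)` is a pair of definition for the valuation `W` on `K̄(x)`, i.e. `W = ν̄_{a,γ}`,
and it is minimal: `a` has least degree over `K` among all `b` with `ν̄(a-b) ≥ γ`. -/
def IsMinimalPairFor (vbar : AddValuation (AlgebraicClosure K) (WithTop Γ))
    (W : AddValuation (RatFunc (AlgebraicClosure K)) (WithTop Γ))
    (a : AlgebraicClosure K) (γ : Γ) : Prop :=
  IsMonomialVal vbar W a γ ∧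
    ∀ b : AlgebraicClosure K, (γ : WithTop Γ) ≤ vbar (a - b) → degOver K a ≤ degOver K b

/-- The valued field extension `(F|B, w)` (along `φ`) is value transcendental:
the quotient of value groups `wF / w(B)` has rational rank one, i.e. there is a value
which is not torsion modulo the value group of the base, and any two values are
`ℚ`-linearly dependent modulo the value group of the base.  (For the extensions of
valuations from `K` to `K(x)` considered in the paper, the second condition is
automatic, by the Abhyankar inequality.) -/
def IsValueTranscendental {B F : Type} [Field B] [Field F] (φ : B →+* F)
    (w : AddValuation F (WithTop Γ)) : Prop :=
  (∃ (f : F) (γf : Γ), f ≠ 0 ∧ w f = (γf : WithTop Γ) ∧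
      ∀ n : ℤ, n ≠ 0 → ∀ c : B, c ≠ 0 → ((n • γf : Γ) : WithTop Γ) ≠ w (φ c)) ∧
  (∀ (f g : F) (γf γg : Γ), f ≠ 0 → g ≠ 0 → w f = (γf : WithTop Γ) → w g = (γg : WithTop Γ) →
      ∃ m n : ℤ, ¬(m = 0 ∧ n = 0) ∧
        ∃ c : B, c ≠ 0 ∧ ((m • γf + n • γg : Γ) : WithTop Γ) = w (φ c))

/-- The residue of `u` (an element of the valuation ring of `(F,w)`) is transcendental
over the residue field of the subset `S ⊆ F`:  whenever a polynomial expression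
`Σᵢ cᵢ uⁱ` with coefficients `cᵢ ∈ S` of value `≥ 0` has value `> 0`, all the
coefficients have value `> 0` (i.e. residue `0`). -/
def ResidueTransOver {F : Type} [Field F] (w : AddValuation F (WithTop Γ))
    (S : Set F) (u : F) : Prop :=
  ∀ (n : ℕ) (c : ℕ → F), (∀ i ∈ Finset.range (n + 1), c i ∈ S ∧ 0 ≤ w (c i)) →
    0 < w (∑ i ∈ Finset.range (n + 1), c i * u ^ i) →
    ∀ i ∈ Finset.range (n + 1), 0 < w (c i)

/-- The valued field extension `(F|B, w)` (along `φ`) is residue transcendental: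
the residue field extension has transcendence degree one, i.e. some residue is
transcendental over the residue field of the base.  (For the extensions of valuations
from `K` to `K(x)` considered in the paper, transcendence degree `≤ 1` is automatic,
by the Abhyankar inequality.) -/
def IsResidueTranscendental {B F : Type} [Field B] [Field F] (φ : B →+* F)
    (w : AddValuation F (WithTop Γ)) : Prop :=
  ∃ f : F, w f = 0 ∧ ResidueTransOver w (Set.range φ) f

/-- The extension is valuation transcendental: value transcendental or residue
transcendental. -/
def IsValuationTranscendental {B F : Type} [Field B] [Field F] (φ : B →+* F)
    (w : AddValuation F (WithTop Γ)) : Prop :=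
  IsValueTranscendental φ w ∨ IsResidueTranscendental φ w

/-- The value group of the subset `S ⊆ F` under `w`, as a subgroup of `Γ`:
the subgroup { w f | f ∈ S, f ≠ 0 }.  (For `S` a subfield this set is already a
subgroup, so taking the generated subgroup is harmless.) -/
def valueSubgroup {F : Type} [Field F] (w : AddValuation F (WithTop Γ)) (S : Set F) :
    AddSubgroup Γ :=
  AddSubgroup.closure {γ : Γ | ∃ f ∈ S, f ≠ 0 ∧ w f = (γ : WithTop Γ)}

/-- The subsets `S₁, S₂` of the valued field `(F,w)` have the same residues, i.e. they
induce the same residue field inside the residue field of `(F,w)`. -/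
def SameResidues {F : Type} [Field F] (w : AddValuation F (WithTop Γ))
    (S₁ S₂ : Set F) : Prop :=
  (∀ f ∈ S₁, 0 ≤ w f → ∃ g ∈ S₂, 0 ≤ w g ∧ 0 < w (f - g)) ∧
  (∀ g ∈ S₂, 0 ≤ w g → ∃ f ∈ S₁, 0 ≤ w f ∧ 0 < w (g - f))

/-- The residue field of `S₂` has degree `j` over the residue field of `S₁` (both viewed
inside the residue field of `(F,w)`): there are `j` elements of `S₂`, integral for `w`,
whose residues form a basis of the residue field of `S₂` over that of `S₁`. -/
def ResidueDegreeIs {F : Type} [Field F] (w : AddValuation F (WithTop Γ))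
    (S₁ S₂ : Set F) (j : ℕ) : Prop :=
  ∃ g : Fin j → F,
    (∀ i, g i ∈ S₂ ∧ 0 ≤ w (g i)) ∧
    (∀ h ∈ S₂, 0 ≤ w h →
      ∃ c : Fin j → F, (∀ i, c i ∈ S₁ ∧ 0 ≤ w (c i)) ∧ 0 < w (h - ∑ i, c i * g i)) ∧
    (∀ c : Fin j → F, (∀ i, c i ∈ S₁ ∧ 0 ≤ w (c i)) →
      0 < w (∑ i, c i * g i) → ∀ i, 0 < w (c i))

/-- `κ` is the Krasner constant `kras(a,K) = max { ν̄(σa - τa) : σ, τ ∈ Gal(K̄|K), σa ≠ τa }`. -/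
def IsKrasnerConstant (vbar : AddValuation (AlgebraicClosure K) (WithTop Γ))
    (a : AlgebraicClosure K) (κ : WithTop Γ) : Prop :=
  (∃ σ τ : AlgebraicClosure K ≃ₐ[K] AlgebraicClosure K, σ a ≠ τ a ∧ vbar (σ a - τ a) = κ) ∧
  (∀ σ τ : AlgebraicClosure K ≃ₐ[K] AlgebraicClosure K, σ a ≠ τ a → vbar (σ a - τ a) ≤ κ)

/-- `y` is separable algebraic over the subfield `E` of `F`: it is the root of a nonzero
separable polynomial with coefficients in `E`. -/
def SepAlgOver {F : Type} [Field F] (E : Subfield F) (y : F) : Prop :=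
  ∃ p : Polynomial F, p ≠ 0 ∧ (∀ i, p.coeff i ∈ E) ∧ p.Separable ∧ p.eval y = 0

/-- `y` is algebraic over the subfield `E` of `F`. -/
def AlgOver {F : Type} [Field F] (E : Subfield F) (y : F) : Prop :=
  ∃ p : Polynomial F, p ≠ 0 ∧ (∀ i, p.coeff i ∈ E) ∧ p.eval y = 0

/-- The henselization `E^h` of the subfield `E` of the algebraically closed valued field
`(F,Ω)`, realized inside `F` as the decomposition field: the set of elements of `F`
separable algebraic over `E` and fixed by every automorphism of `F` over `E` which
preserves the valuation `Ω`. -/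
def henselizationSet {F : Type} [Field F] (Ω : AddValuation F (WithTop Γ))
    (E : Subfield F) : Set F :=
  {y | SepAlgOver E y ∧
    ∀ σ : F ≃+* F, (∀ e ∈ E, σ e = e) → (∀ z, Ω (σ z) = Ω z) → σ y = y}

/-- A fixed algebraic closure of `K̄(x)`; it is also an algebraic closure of `K(x)`. -/
abbrev Lhat (K : Type) [Field K] : Type := AlgebraicClosure (RatFunc (AlgebraicClosure K))

/-- The canonical embedding `K̄ → Lhat K`. -/
def toL (K : Type) [Field K] : AlgebraicClosure K →+* Lhat K :=
  (algebraMap (RatFunc (AlgebraicClosure K)) (Lhat K)).comp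
    (algebraMap (AlgebraicClosure K) (RatFunc (AlgebraicClosure K)))

/-- The canonical embedding `K(x) → Lhat K`. -/
def kxToL (K : Type) [Field K] : RatFunc K →+* Lhat K :=
  (algebraMap (RatFunc (AlgebraicClosure K)) (Lhat K)).comp (liftRF K)

/-- The subfield `K(x)` of `Lhat K`. -/
def KxSub (K : Type) [Field K] : Subfield (Lhat K) := (kxToL K).fieldRange

/-- The subfield `K` of `Lhat K`. -/
def KSub (K : Type) [Field K] : Subfield (Lhat K) :=
  ((toL K).comp (algebraMap K (AlgebraicClosure K))).fieldRange

/-- The subfield `K(a)` of `Lhat K`, for `a ∈ K̄`. -/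
def KadjSub (K : Type) [Field K] (a : AlgebraicClosure K) : Subfield (Lhat K) :=
  Subfield.closure ((KSub K : Set (Lhat K)) ∪ {toL K a})

/-- The subfield `K(a,x)` of `Lhat K`, for `a ∈ K̄`. -/
def KaxSub (K : Type) [Field K] (a : AlgebraicClosure K) : Subfield (Lhat K) :=
  Subfield.closure ((KxSub K : Set (Lhat K)) ∪ {toL K a})

/-- The implicit constant field `IC(K(x)|K,ω) = K̄ ∩ K(x)^h`, computed inside the fixed
algebraic closure `Lhat K` of `K(x)` with respect to the valuation `Ω` on it. -/
def ICset (K : Type) [Field K] {Γ : Type} [AddCommGroup Γ] [LinearOrder Γ] [IsOrderedAddMonoid Γ]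
    (Ω : AddValuation (Lhat K) (WithTop Γ)) : Set (Lhat K) :=
  Set.range (toL K) ∩ henselizationSet Ω (KxSub K)

/-- `σ` belongs to the absolute inertia group of `(K,ν̄)`:
`ν̄(σc - c) > 0` for every `c` in the valuation ring of `K^sep`. -/
def InInertiaGroup (vbar : AddValuation (AlgebraicClosure K) (WithTop Γ))
    (σ : AlgebraicClosure K ≃ₐ[K] AlgebraicClosure K) : Prop :=
  ∀ c : AlgebraicClosure K, (minpoly K c).Separable → 0 ≤ vbar c → 0 < vbar (σ c - c)

/-- `σ` belongs to the absolute ramification group of `(K,ν̄)`: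
`ν̄(σc - c) > ν̄ c` for every `c ∈ K^sep`, `c ≠ 0`. -/
def InRamificationGroup (vbar : AddValuation (AlgebraicClosure K) (WithTop Γ))
    (σ : AlgebraicClosure K ≃ₐ[K] AlgebraicClosure K) : Prop :=
  ∀ c : AlgebraicClosure K, c ≠ 0 → (minpoly K c).Separable → vbar c < vbar (σ c - c)

/-- The absolute inertia field `K^i` of `(K,ν̄)`, as a subset of `K̄`: the fixed field in
`K^sep` of the absolute inertia group. -/
def inertiaFieldSet (vbar : AddValuation (AlgebraicClosure K) (WithTop Γ)) :
    Set (AlgebraicClosure K) :=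
  {c | (minpoly K c).Separable ∧
    ∀ σ : AlgebraicClosure K ≃ₐ[K] AlgebraicClosure K, InInertiaGroup vbar σ → σ c = c}

/-- The absolute ramification field `K^r` of `(K,ν̄)`, as a subset of `K̄`: the fixed field
in `K^sep` of the absolute ramification group. -/
def ramificationFieldSet (vbar : AddValuation (AlgebraicClosure K) (WithTop Γ)) :
    Set (AlgebraicClosure K) :=
  {c | (minpoly K c).Separable ∧
    ∀ σ : AlgebraicClosure K ≃ₐ[K] AlgebraicClosure K, InRamificationGroup vbar σ → σ c = c}

/-- `(K,ν)` is henselian, i.e. `ν` extends uniquely to `K̄`; equivalently (all extensions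
of `ν` to `K̄` being conjugate), the fixed extension `ν̄` is invariant under `Gal(K̄|K)`. -/
def IsHenselianBase (vbar : AddValuation (AlgebraicClosure K) (WithTop Γ)) : Prop :=
  ∀ σ : AlgebraicClosure K ≃ₐ[K] AlgebraicClosure K, ∀ c, vbar (σ c) = vbar c

/-- `ν` admits a unique extension from `K` to `K(a)`; equivalently, all the conjugate
extensions agree on `K(a)`. -/
def UniqueExtensionOn (vbar : AddValuation (AlgebraicClosure K) (WithTop Γ))
    (a : AlgebraicClosure K) : Prop :=
  ∀ σ : AlgebraicClosure K ≃ₐ[K] AlgebraicClosure K,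
    ∀ b ∈ IntermediateField.adjoin K {a}, vbar (σ b) = vbar b

/-- `succ` is a successor function for the linear order `ι`. -/
def IsSuccFn {ι : Type} [LinearOrder ι] (succ : ι → ι) : Prop :=
  ∀ μ, μ < succ μ ∧ ∀ ρ, μ < ρ → succ μ ≤ ρ

/-- `z` is a pseudo-Cauchy sequence in `(F,v)`. -/
def IsPseudoCauchy {F ι : Type} [Field F] [LinearOrder ι]
    (v : AddValuation F (WithTop Γ)) (z : ι → F) : Prop :=
  ∀ ⦃μ₁ μ₂ μ₃ : ι⦄, μ₁ < μ₂ → μ₂ < μ₃ → v (z μ₁ - z μ₂) < v (z μ₂ - z μ₃)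

/-- `y` (in the valued extension `(F,w)` of `(B,v)` along `φ`) is a limit of the
pseudo-Cauchy sequence `z` in `(B,v)`:  `w(y - z_μ) = v(z_μ - z_{μ+1})` for all `μ`. -/
def IsPCLimit {B F ι : Type} [Field B] [Field F] [LinearOrder ι]
    (succ : ι → ι) (φ : B →+* F)
    (v : AddValuation B (WithTop Γ)) (w : AddValuation F (WithTop Γ))
    (z : ι → B) (y : F) : Prop :=
  ∀ μ : ι, w (y - φ (z μ)) = v (z μ - z (succ μ))

/-- The sequence `s` is ultimately constant. -/
def UltimatelyConstant {ι α : Type} [LinearOrder ι] (s : ι → α) : Prop :=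
  ∃ μ₀, ∀ μ, μ₀ ≤ μ → s μ = s μ₀

/-- The sequence `s` is ultimately (strictly) monotonically increasing. -/
def UltimatelyStrictMono {ι α : Type} [LinearOrder ι] [Preorder α] (s : ι → α) : Prop :=
  ∃ μ₀, ∀ μ₁ μ₂, μ₀ ≤ μ₁ → μ₁ < μ₂ → s μ₁ < s μ₂

/-- The pseudo-Cauchy sequence `z` in `(B,v)` is of transcendental type. -/
def IsTranscendentalType {B ι : Type} [Field B] [LinearOrder ι]
    (v : AddValuation B (WithTop Γ)) (z : ι → B) : Prop :=
  ∀ f : Polynomial B, UltimatelyConstant (fun μ => v (f.eval (z μ)))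

/-- `m` is an associated minimal polynomial of the pseudo-Cauchy sequence `z` of
algebraic type: a monic polynomial of minimal degree such that `(v m(z_μ))_μ` is
ultimately monotonically increasing. -/
def IsAssocMinPoly {B ι : Type} [Field B] [LinearOrder ι]
    (v : AddValuation B (WithTop Γ)) (z : ι → B) (m : Polynomial B) : Prop :=
  m.Monic ∧ UltimatelyStrictMono (fun μ => v (m.eval (z μ))) ∧
    ∀ g : Polynomial B, g.Monic → UltimatelyStrictMono (fun μ => v (g.eval (z μ))) →
      m.natDegree ≤ g.natDegree

/-- `d = δ(f) = max { ω̄(x - c) : c ∈ K̄, f(c) = 0 }`, computed with respect to the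
extension `W = ω̄` of `ω` to `K̄(x)`. -/
def IsDeltaOf (W : AddValuation (RatFunc (AlgebraicClosure K)) (WithTop Γ))
    (f : Polynomial K) (d : WithTop Γ) : Prop :=
  (∃ c : AlgebraicClosure K, Polynomial.aeval c f = 0 ∧
      W (RatFunc.X - algebraMap (AlgebraicClosure K) (RatFunc (AlgebraicClosure K)) c) = d) ∧
  ∀ c : AlgebraicClosure K, Polynomial.aeval c f = 0 →
      W (RatFunc.X - algebraMap (AlgebraicClosure K) (RatFunc (AlgebraicClosure K)) c) ≤ d

/-- `Q` is a key polynomial for `ω` over `K` (with respect to the extension `W = ω̄`,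
on which `δ` does not depend): `Q` is monic and `deg f < deg Q → δ(f) < δ(Q)`. -/
def IsKeyPolynomial (W : AddValuation (RatFunc (AlgebraicClosure K)) (WithTop Γ))
    (Q : Polynomial K) : Prop :=
  Q.Monic ∧ ∀ f : Polynomial K, f.natDegree < Q.natDegree →
    ∀ df dQ : WithTop Γ, IsDeltaOf W f df → IsDeltaOf W Q dQ → df < dQ

/-- `(a,z)` is a distinguished pair over the henselian field `(K,ν̄)`:
`[K(z):K] < [K(a):K]`, `ν̄(a-z) = δ(a,K) = max M(a)`, and `[K(z):K]` is minimal
with these properties. -/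
def IsDistinguishedPair (vbar : AddValuation (AlgebraicClosure K) (WithTop Γ))
    (a z : AlgebraicClosure K) : Prop :=
  degOver K z < degOver K a ∧
  (∀ z' : AlgebraicClosure K, degOver K z' < degOver K a → vbar (a - z') ≤ vbar (a - z)) ∧
  (∀ z' : AlgebraicClosure K, degOver K z' < degOver K a → vbar (a - z') = vbar (a - z) →
      degOver K z ≤ degOver K z')

/-- The extension `(E(x)|E, W)` inside the valued field `(F,W)` is pure, where `x ∈ F`:
(PE1) some `W(x-c)`, `c ∈ E`, is non-torsion modulo the value group of `E`, or
(PE2) some `b(x-c)`, `b,c ∈ E`, has value `0` and residue transcendental over the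
residue field of `E`, or (PE3) `x` is the limit of a pseudo-Cauchy sequence of
transcendental type in `(E,W)`. -/
def IsPureExt {F : Type} [Field F] (W : AddValuation F (WithTop Γ))
    (E : Subfield F) (x : F) : Prop :=
  (∃ c ∈ E, ∃ γ : Γ, W (x - c) = (γ : WithTop Γ) ∧
      ∀ n : ℤ, n ≠ 0 → ∀ b ∈ E, b ≠ 0 → ((n • γ : Γ) : WithTop Γ) ≠ W b) ∨
  (∃ b ∈ E, ∃ c ∈ E, W (b * (x - c)) = 0 ∧ ResidueTransOver W (E : Set F) (b * (x - c))) ∨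
  (∃ (ι : Type) (_ : LinearOrder ι) (succ : ι → ι), Nonempty ι ∧ IsSuccFn succ ∧
      ∃ z : ι → F, (∀ μ, z μ ∈ E) ∧ IsPseudoCauchy W z ∧
        (∀ p : Polynomial F, (∀ i, p.coeff i ∈ E) →
          UltimatelyConstant fun μ => W (p.eval (z μ))) ∧
        IsPCLimit succ (RingHom.id F) W W z x)

/-- The extension `(E(x)|E, W)` is weakly pure: it is pure, or some `b(x-c)^e` with
`b,c ∈ E`, `e ∈ ℕ`, has value `0` and residue transcendental over the residue field
of `E`. -/
def IsWeaklyPureExt {F : Type} [Field F] (W : AddValuation F (WithTop Γ))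
    (E : Subfield F) (x : F) : Prop :=
  IsPureExt W E x ∨
    ∃ b ∈ E, ∃ c ∈ E, ∃ e : ℕ, W (b * (x - c) ^ e) = 0 ∧
      ResidueTransOver W (E : Set F) (b * (x - c) ^ e)


/-!
Let `T ⊆ Γ` be the divisible hull of `νK`. Every value of `K̄` lies in `T`, because a minimal
polynomial can only vanish if two of its terms have the same value; hence value transcendence
forces `γ ∉ T`. Consequently, for each nonzero polynomial the minimum defining `ν̄_{a,γ}` is
attained at a single Taylor index, and `ωQ ∈ T + mγ` with `m ≥ 1` (as `Q(a) = 0`), so `ωQ ∉ T`.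
Minimality of `(a,γ)` keeps the roots of every `f` with `deg f < deg Q` at distance `< γ` from `a`,
so that `ωf = ν̄ f(a)`. Division by `Q` then puts every value of `K[x]` in `ν̄K(a) + ℕ·ωQ`, a
direct sum since `ν̄K(a) ⊆ T`. For residues: if `ω(p/q) = 0`, then `p` and `q` attain their
minima at the same index `m`, and `p/q` is congruent to the ratio of their `m`-th Taylor
coefficients at `a`, an element of `K(a)`.
-/

open scoped IntermediateField

section ValueDivHull

variable {F : Type} [Field F] (v : AddValuation F (WithTop Γ))

def valueDivHull : AddSubgroup Γ where
  carrier := {δ | ∃ n : ℕ, n ≠ 0 ∧ ∃ c : F, c ≠ 0 ∧ v c = ((n • δ : Γ) : WithTop Γ)}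
  zero_mem' := ⟨1, one_ne_zero, 1, one_ne_zero, by simp⟩
  add_mem' := by
    rintro δ₁ δ₂ ⟨n₁, hn₁, c₁, hc₁, h₁⟩ ⟨n₂, hn₂, c₂, hc₂, h₂⟩
    refine ⟨n₁ * n₂, mul_ne_zero hn₁ hn₂, c₁ ^ n₂ * c₂ ^ n₁,
      mul_ne_zero (pow_ne_zero _ hc₁) (pow_ne_zero _ hc₂), ?_⟩
    rw [v.map_mul, v.map_pow, v.map_pow, h₁, h₂, ← WithTop.coe_nsmul, ← WithTop.coe_nsmul,
      ← WithTop.coe_add, smul_add, smul_smul, smul_smul, mul_comm n₂ n₁]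
  neg_mem' := by
    rintro δ ⟨n, hn, c, hc, h⟩
    exact ⟨n, hn, c⁻¹, inv_ne_zero hc, by
      rw [v.map_inv, h, smul_neg, WithTop.LinearOrderedAddCommGroup.coe_neg]⟩

variable {v}

lemma mem_valueDivHull {c : F} (hc : c ≠ 0) {δ : Γ} (h : v c = δ) : δ ∈ valueDivHull v :=
  ⟨1, one_ne_zero, c, hc, by rwa [one_smul]⟩

lemma mem_valueDivHull_of_nsmul_mem {n : ℕ} (hn : n ≠ 0) {δ : Γ}
    (h : n • δ ∈ valueDivHull v) : δ ∈ valueDivHull v := by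
  obtain ⟨k, hk, c, hc, hv⟩ := h
  exact ⟨n * k, mul_ne_zero hn hk, c, hc, by rwa [mul_nsmul]⟩

lemma mem_valueDivHull_of_zsmul_mem {n : ℤ} (hn : n ≠ 0) {δ : Γ}
    (h : n • δ ∈ valueDivHull v) : δ ∈ valueDivHull v := by
  refine mem_valueDivHull_of_nsmul_mem (Int.natAbs_ne_zero.2 hn) ?_
  rcases Int.natAbs_eq n with hn' | hn'
  · rwa [hn', natCast_zsmul] at h
  · rwa [hn', neg_smul, natCast_zsmul, neg_mem_iff] at h

lemma eq_of_add_nsmul_eq_add_nsmul {u u' δ : Γ} (hu : u ∈ valueDivHull v)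
    (hu' : u' ∈ valueDivHull v) (hδ : δ ∉ valueDivHull v) {m m' : ℕ}
    (h : u + m • δ = u' + m' • δ) : m = m' ∧ u = u' := by
  obtain rfl : m = m' := by
    by_contra hne
    have hsmul : ((m : ℤ) - m') • δ = u' - u := by
      rw [sub_smul, natCast_zsmul, natCast_zsmul, sub_eq_sub_iff_add_eq_add, add_comm]
      exact h
    exact hδ (mem_valueDivHull_of_zsmul_mem (sub_ne_zero.2 (Nat.cast_injective.ne hne))
      (hsmul ▸ sub_mem hu' hu))
  exact ⟨rfl, add_right_cancel h⟩

variable (v) in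
lemma exists_val_eq_of_sum_eq_zero {ι : Type} {s : Finset ι} (hs : s.Nonempty) {f : ι → F}
    (hf : ∀ i ∈ s, f i ≠ 0) (hsum : ∑ i ∈ s, f i = 0) :
    ∃ i ∈ s, ∃ j ∈ s, i ≠ j ∧ v (f i) = v (f j) := by
  classical
  obtain ⟨i, hi, hmin⟩ := s.exists_min_image (fun i => v (f i)) hs
  by_contra! hne
  have hrest : v (f i) < v (∑ j ∈ s.erase i, f j) :=
    v.map_lt_sum (v.ne_top_iff.2 (hf i hi)) fun j hj =>
      (hmin j (Finset.mem_of_mem_erase hj)).lt_of_ne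
        (hne i hi j (Finset.mem_of_mem_erase hj) (Finset.ne_of_mem_erase hj).symm)
  have := v.map_add_eq_of_lt_left hrest
  rw [Finset.add_sum_erase s f hi, hsum, v.map_zero] at this
  exact hf i hi (v.top_iff.1 this.symm)

lemma exists_val_eq_mem_valueDivHull {L : Type} [Field L] [Algebra F L]
    (v : AddValuation L (WithTop Γ)) {κ : L} (hκ : IsAlgebraic F κ) (h0 : κ ≠ 0) :
    ∃ δ ∈ valueDivHull (v.comap (algebraMap F L)), v κ = δ := by
  classical
  obtain ⟨δ, hδ⟩ := WithTop.ne_top_iff_exists.1 (v.ne_top_iff.2 h0)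
  refine ⟨δ, by_contra fun hδT => ?_, hδ.symm⟩
  set p := minpoly F κ
  have hp : p ≠ 0 := minpoly.ne_zero hκ.isIntegral
  have hsum : ∑ i ∈ p.support, algebraMap F L (p.coeff i) * κ ^ i = 0 := by
    rw [← minpoly.aeval F κ, aeval_def, eval₂_eq_sum, Polynomial.sum_def]
  obtain ⟨i, hi, j, hj, hij, heq⟩ := exists_val_eq_of_sum_eq_zero v
    (support_nonempty.2 hp) (fun i hi => mul_ne_zero
      ((_root_.map_ne_zero _).2 (mem_support_iff.1 hi)) (pow_ne_zero _ h0)) hsum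
  have hcoeff : ∀ i ∈ p.support, ∃ u ∈ valueDivHull (v.comap (algebraMap F L)),
      v (algebraMap F L (p.coeff i)) = u := fun i hi => by
    obtain ⟨u, hu⟩ := WithTop.ne_top_iff_exists.1
      (v.ne_top_iff.2 ((_root_.map_ne_zero (algebraMap F L)).2 (mem_support_iff.1 hi)))
    exact ⟨u, mem_valueDivHull (mem_support_iff.1 hi) hu.symm, hu.symm⟩
  obtain ⟨u, hu, hvu⟩ := hcoeff i hi
  obtain ⟨u', hu', hvu'⟩ := hcoeff j hj
  rw [v.map_mul, v.map_mul, v.map_pow, v.map_pow, hvu, hvu', ← hδ, ← WithTop.coe_nsmul,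
    ← WithTop.coe_nsmul, ← WithTop.coe_add, ← WithTop.coe_add, WithTop.coe_inj] at heq
  exact hij (eq_of_add_nsmul_eq_add_nsmul hu hu' hδT heq).1

end ValueDivHull

lemma hasseDeriv_map {R S : Type*} [CommSemiring R] [CommSemiring S] (φ : R →+* S) (k : ℕ)
    (f : R[X]) : hasseDeriv k (f.map φ) = (hasseDeriv k f).map φ := by
  ext n
  simp [hasseDeriv_coeff, coeff_map]

lemma aeval_mem_adjoin_simple {E : Type} [Field E] [Algebra K E] (a : E) (f : K[X]) :
    aeval a f ∈ K⟮a⟯ :=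
  IntermediateField.algebra_adjoin_le_adjoin K {a} (aeval_mem_adjoin_singleton K a)

lemma taylor_map_coeff_mem_adjoin (a : AlgebraicClosure K) (f : K[X]) (i : ℕ) :
    (taylor a (f.map (algebraMap K (AlgebraicClosure K)))).coeff i ∈ K⟮a⟯ := by
  rw [taylor_coeff, hasseDeriv_map, eval_map_algebraMap]
  exact aeval_mem_adjoin_simple a _

lemma exists_aeval_eq_of_mem_adjoin {E : Type} [Field E] [Algebra K E] {a : E}
    (ha : IsIntegral K a) {b : E} (hb : b ∈ K⟮a⟯) :
    ∃ h : K[X], h.natDegree < (minpoly K a).natDegree ∧ aeval a h = b := by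
  obtain ⟨h, hdeg, hh⟩ := (IntermediateField.adjoin.powerBasis ha).exists_eq_aeval ⟨b, hb⟩
  refine ⟨h, by rwa [IntermediateField.adjoin.powerBasis_dim] at hdeg, ?_⟩
  rw [IntermediateField.adjoin.powerBasis_gen] at hh
  rw [← IntermediateField.AdjoinSimple.coe_aeval_gen_apply, ← hh]

lemma algebraMap_C_eq_algebraMap {L : Type} [Field L] (c : L) :
    algebraMap L[X] (RatFunc L) (C c) = algebraMap L (RatFunc L) c := by
  rw [RatFunc.algebraMap_C, RatFunc.algebraMap_eq_C]

lemma liftRF_algebraMap (p : K[X]) :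
    liftRF K (algebraMap K[X] (RatFunc K) p) =
      algebraMap _ _ (p.map (algebraMap K (AlgebraicClosure K))) := by
  rw [← div_one (algebraMap K[X] (RatFunc K) p), ← map_one (algebraMap K[X] (RatFunc K)), liftRF,
    RatFunc.coe_mapRingHom_eq_coe_map, RatFunc.map_apply_div]
  simp

lemma mem_of_val_polynomial_mem {ω : AddValuation (RatFunc K) (WithTop Γ)} {H : AddSubgroup Γ}
    (hpoly : ∀ p : K[X], p ≠ 0 → ∃ δ ∈ H, ω (algebraMap K[X] (RatFunc K) p) = δ)
    {f : RatFunc K} (hf : f ≠ 0) {δ : Γ} (hδ : ω f = δ) : δ ∈ H := by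
  obtain ⟨δ₁, h₁, hv₁⟩ := hpoly _ (RatFunc.num_ne_zero hf)
  obtain ⟨δ₂, h₂, hv₂⟩ := hpoly _ f.denom_ne_zero
  have hδ₁₂ : δ = δ₁ - δ₂ := by
    rw [← WithTop.coe_inj, WithTop.LinearOrderedAddCommGroup.coe_sub, ← hv₁, ← hv₂, ← hδ,
      ← ω.map_div, RatFunc.num_div_denom]
  exact hδ₁₂ ▸ sub_mem h₁ h₂

section MonomialExtension

variable {vbar : AddValuation (AlgebraicClosure K) (WithTop Γ)}
  {ω : AddValuation (RatFunc K) (WithTop Γ)}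
  {W : AddValuation (RatFunc (AlgebraicClosure K)) (WithTop Γ)} {a : AlgebraicClosure K} {γ : Γ}

variable (vbar) in
abbrev baseValueDivHull : AddSubgroup Γ :=
  valueDivHull (vbar.comap (algebraMap K (AlgebraicClosure K)))

namespace IsMonomialVal

lemma val_le (hmon : IsMonomialVal vbar W a γ) (P : (AlgebraicClosure K)[X]) (i : ℕ) :
    W (algebraMap _ _ P) ≤ vbar ((taylor a P).coeff i) + i • (γ : WithTop Γ) := by
  rcases lt_or_ge P.natDegree i with hi | hi
  · rw [coeff_eq_zero_of_natDegree_lt (by rwa [natDegree_taylor]), vbar.map_zero, top_add]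
    exact le_top
  · rw [hmon P]
    exact Finset.inf_le (Finset.mem_range_succ_iff.2 hi)

lemma exists_val_eq (hmon : IsMonomialVal vbar W a γ) (P : (AlgebraicClosure K)[X]) :
    ∃ m : ℕ, W (algebraMap _ _ P) = vbar ((taylor a P).coeff m) + m • (γ : WithTop Γ) := by
  obtain ⟨m, -, hm⟩ := Finset.exists_mem_eq_inf _ Finset.nonempty_range_add_one
    fun i => vbar ((taylor a P).coeff i) + i • (γ : WithTop Γ)
  exact ⟨m, (hmon P).trans hm⟩

lemma lt_val (hmon : IsMonomialVal vbar W a γ) (P : (AlgebraicClosure K)[X]) {c : WithTop Γ}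
    (hc : c ≠ ⊤) (h : ∀ i : ℕ, c < vbar ((taylor a P).coeff i) + i • (γ : WithTop Γ)) :
    c < W (algebraMap _ _ P) := by
  rw [hmon P]
  exact (Finset.lt_inf_iff (lt_top_iff_ne_top.2 hc)).2 fun i _ => h i

lemma val_C (hmon : IsMonomialVal vbar W a γ) (c : AlgebraicClosure K) :
    W (algebraMap _ _ (C c)) = vbar c := by
  simpa [taylor_C] using hmon (C c)

lemma val_algebraMap (hmon : IsMonomialVal vbar W a γ) (c : AlgebraicClosure K) :
    W (algebraMap (AlgebraicClosure K) _ c) = vbar c := by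
  rw [← hmon.val_C, algebraMap_C_eq_algebraMap]

lemma val_X_sub_C (hmon : IsMonomialVal vbar W a γ) (b : AlgebraicClosure K) :
    W (algebraMap _ _ (X - C b)) = min (vbar (a - b)) γ := by
  rw [hmon, natDegree_X_sub_C, Finset.range_add_one, Finset.range_one, Finset.inf_insert,
    Finset.inf_singleton]
  simp [min_comm]

lemma val_eq_eval_of_roots (hmon : IsMonomialVal vbar W a γ) (P : (AlgebraicClosure K)[X])
    (h : ∀ b ∈ P.roots, vbar (a - b) < γ) : W (algebraMap _ _ P) = vbar (P.eval a) := by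
  have hmul : ∀ Q R : (AlgebraicClosure K)[X], W (algebraMap _ _ Q) = vbar (Q.eval a) →
      W (algebraMap _ _ R) = vbar (R.eval a) →
      W (algebraMap _ _ (Q * R)) = vbar ((Q * R).eval a) := by
    intro Q R hQ hR
    rw [map_mul, W.map_mul, hQ, hR, eval_mul, vbar.map_mul]
  rw [(IsAlgClosed.splits P).eq_prod_roots]
  refine hmul _ _ (by rw [hmon.val_C, eval_C]) (Multiset.prod_induction _ _ hmul
    (by rw [map_one, W.map_one, eval_one, vbar.map_one]) ?_)
  simp only [Multiset.mem_map]
  rintro _ ⟨b, hb, rfl⟩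
  rw [hmon.val_X_sub_C, eval_sub, eval_X, eval_C, min_eq_left (h b hb).le]

end IsMonomialVal

lemma IsMinimalPairFor.val_map_eq_aeval (hW : IsMinimalPairFor vbar W a γ) {f : K[X]}
    (hf : f ≠ 0) (hdeg : f.natDegree < (minpoly K a).natDegree) :
    W (algebraMap _ _ (f.map (algebraMap K (AlgebraicClosure K)))) = vbar (aeval a f) := by
  rw [hW.1.val_eq_eval_of_roots, eval_map_algebraMap]
  intro b hb
  by_contra! hle
  have hroot : aeval b f = 0 := by rwa [mem_roots_map hf, ← aeval_def] at hb
  exact (hW.2 b hle).not_gt (hdeg.trans_le' (natDegree_le_of_dvd (minpoly.dvd K b hroot) hf))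

variable (vbar) in
lemma exists_val_eq_mem_baseValueDivHull {c : AlgebraicClosure K} (hc : c ≠ 0) :
    ∃ u ∈ baseValueDivHull vbar, vbar c = u :=
  exists_val_eq_mem_valueDivHull vbar (Algebra.IsAlgebraic.isAlgebraic c) hc

variable (vbar) in
lemma valueSubgroup_le_baseValueDivHull (S : Set (AlgebraicClosure K)) :
    valueSubgroup vbar S ≤ baseValueDivHull vbar := by
  refine (AddSubgroup.closure_le _).2 ?_
  rintro δ ⟨b, -, hb, hδ⟩
  obtain ⟨u, hu, hbu⟩ := exists_val_eq_mem_baseValueDivHull vbar hb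
  rwa [WithTop.coe_injective (hδ.symm.trans hbu)]

lemma IsMonomialVal.exists_val_eq_coe (hmon : IsMonomialVal vbar W a γ)
    {P : (AlgebraicClosure K)[X]} (hP : P ≠ 0) :
    ∃ m : ℕ, ∃ u ∈ baseValueDivHull vbar,
      vbar ((taylor a P).coeff m) = u ∧ W (algebraMap _ _ P) = ((u + m • γ : Γ) : WithTop Γ) := by
  obtain ⟨m, hm⟩ := hmon.exists_val_eq P
  have hcm : (taylor a P).coeff m ≠ 0 := by
    intro h0
    rw [h0, vbar.map_zero, top_add, W.top_iff,
      map_eq_zero_iff _ (RatFunc.algebraMap_injective _)] at hm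
    exact hP hm
  obtain ⟨u, hu, hcu⟩ := exists_val_eq_mem_baseValueDivHull vbar hcm
  exact ⟨m, u, hu, hcu, by rw [hm, hcu, WithTop.coe_add, WithTop.coe_nsmul]⟩

lemma IsMonomialVal.val_lt_of_ne (hmon : IsMonomialVal vbar W a γ)
    (hγ : γ ∉ baseValueDivHull vbar) {P : (AlgebraicClosure K)[X]} {m : ℕ} {u : Γ}
    (hu : u ∈ baseValueDivHull vbar)
    (hP : W (algebraMap _ _ P) = ((u + m • γ : Γ) : WithTop Γ)) {i : ℕ} (hi : i ≠ m) :
    W (algebraMap _ _ P) < vbar ((taylor a P).coeff i) + i • (γ : WithTop Γ) := by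
  refine (hmon.val_le P i).lt_of_ne fun h => hi ?_
  have hci : (taylor a P).coeff i ≠ 0 := by
    rintro h0
    rw [h0, vbar.map_zero, top_add, hP] at h
    exact WithTop.coe_ne_top h
  obtain ⟨u', hu', hcu'⟩ := exists_val_eq_mem_baseValueDivHull vbar hci
  rw [hP, hcu', ← WithTop.coe_nsmul, ← WithTop.coe_add, WithTop.coe_inj] at h
  exact (eq_of_add_nsmul_eq_add_nsmul hu' hu hγ h.symm).1

lemma IsMonomialVal.exists_lt_val_sub_C_mul (hmon : IsMonomialVal vbar W a γ)
    (hγ : γ ∉ baseValueDivHull vbar) {P R : (AlgebraicClosure K)[X]} (hR : R ≠ 0)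
    (hPR : W (algebraMap _ _ P) = W (algebraMap _ _ R)) :
    ∃ m : ℕ, (taylor a R).coeff m ≠ 0 ∧
      vbar ((taylor a P).coeff m / (taylor a R).coeff m) = 0 ∧
      W (algebraMap _ _ R) <
        W (algebraMap _ _ (P - C ((taylor a P).coeff m / (taylor a R).coeff m) * R)) := by
  obtain ⟨m, u, hu, hRm, hRval⟩ := hmon.exists_val_eq_coe hR
  have hP : P ≠ 0 := by
    rintro rfl
    rw [map_zero, W.map_zero, hRval] at hPR
    exact WithTop.coe_ne_top hPR.symm
  obtain ⟨m', u', hu', hPm, hPval⟩ := hmon.exists_val_eq_coe hP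
  -- `γ ∉ T` forces both minima to sit at the same index, with coefficients of equal value
  obtain ⟨rfl, rfl⟩ := eq_of_add_nsmul_eq_add_nsmul hu' hu hγ
    (WithTop.coe_injective (hPval.symm.trans (hPR.trans hRval)))
  have hcR : (taylor a R).coeff m' ≠ 0 := by
    rintro h0
    rw [h0, vbar.map_zero] at hRm
    exact WithTop.coe_ne_top hRm.symm
  set c := (taylor a P).coeff m' / (taylor a R).coeff m'
  have hc : vbar c = 0 := by
    rw [vbar.map_div, hPm, hRm, ← WithTop.LinearOrderedAddCommGroup.coe_sub, sub_self,
      WithTop.coe_zero]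
  refine ⟨m', hcR, hc, hmon.lt_val _ (by rw [hRval]; exact WithTop.coe_ne_top) fun i => ?_⟩
  rw [map_sub, taylor_mul, taylor_C, coeff_sub, coeff_C_mul]
  rcases eq_or_ne i m' with rfl | hi
  · rw [div_mul_cancel₀ _ hcR, sub_self, vbar.map_zero, top_add, hRval]
    exact WithTop.coe_lt_top _
  · have hPi := hmon.val_lt_of_ne hγ hu' hPval hi
    rw [hPR] at hPi
    have hRi := hmon.val_lt_of_ne hγ hu' hRval hi
    calc W (algebraMap _ _ R)
        < min (vbar ((taylor a P).coeff i) + i • (γ : WithTop Γ))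
            (vbar (c * (taylor a R).coeff i) + i • (γ : WithTop Γ)) :=
          lt_min hPi (by rwa [vbar.map_mul, hc, zero_add])
      _ = min (vbar ((taylor a P).coeff i)) (vbar (c * (taylor a R).coeff i)) +
            i • (γ : WithTop Γ) := min_add_add_right _ _ _
      _ ≤ _ := by gcongr; exact vbar.map_sub _ _

lemma Extends.val_algebraMap_polynomial (hWω : Extends (liftRF K) ω W) (p : K[X]) :
    ω (algebraMap K[X] (RatFunc K) p) =
      W (algebraMap _ _ (p.map (algebraMap K (AlgebraicClosure K)))) := by
  rw [← hWω, liftRF_algebraMap]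

lemma Extends.val_algebraMap (hmon : IsMonomialVal vbar W a γ)
    (hWω : Extends (liftRF K) ω W) (c : K) :
    ω (algebraMap K (RatFunc K) c) = vbar (algebraMap K (AlgebraicClosure K) c) := by
  rw [← hmon.val_C, ← Polynomial.map_C, ← hWω.val_algebraMap_polynomial,
    algebraMap_C_eq_algebraMap]

lemma notMem_baseValueDivHull_of_isValueTranscendental (hmon : IsMonomialVal vbar W a γ)
    (hWω : Extends (liftRF K) ω W) (hvt : IsValueTranscendental (algebraMap K (RatFunc K)) ω) :
    γ ∉ baseValueDivHull vbar := by
  intro hγ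
  have hpoly : ∀ p : K[X], p ≠ 0 → ∃ δ ∈ baseValueDivHull vbar,
      ω (algebraMap K[X] (RatFunc K) p) = δ := fun p hp => by
    obtain ⟨m, u, hu, -, hval⟩ := hmon.exists_val_eq_coe (Polynomial.map_ne_zero hp)
    exact ⟨u + m • γ, add_mem hu (nsmul_mem hγ m), by rw [hWω.val_algebraMap_polynomial, hval]⟩
  obtain ⟨f, γf, hf, hωf, hnt⟩ := hvt.1
  obtain ⟨n, hn, c, hc, hcv⟩ := mem_of_val_polynomial_mem hpoly hf hωf
  refine hnt n (Int.natCast_ne_zero.2 hn) c hc ?_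
  rw [natCast_zsmul, ← hcv]
  exact (hWω.val_algebraMap hmon c).symm

lemma exists_val_minpoly_notMem (hmon : IsMonomialVal vbar W a γ)
    (hWω : Extends (liftRF K) ω W) (hγ : γ ∉ baseValueDivHull vbar) :
    ∃ γQ : Γ, ω (algebraMap K[X] (RatFunc K) (minpoly K a)) = γQ ∧
      γQ ∉ baseValueDivHull vbar := by
  have hQ := minpoly.ne_zero (Algebra.IsIntegral.isIntegral (R := K) a)
  obtain ⟨m, u, hu, hum, hval⟩ := hmon.exists_val_eq_coe (Polynomial.map_ne_zero hQ)
  refine ⟨u + m • γ, by rw [hWω.val_algebraMap_polynomial, hval], fun hQγ => ?_⟩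
  obtain ⟨rfl, -⟩ := eq_of_add_nsmul_eq_add_nsmul hQγ hu hγ (m := 0) (m' := m) (by simp)
  rw [taylor_coeff_zero, eval_map_algebraMap, minpoly.aeval, vbar.map_zero] at hum
  exact WithTop.coe_ne_top hum.symm

lemma IsMinimalPairFor.val_eq_aeval (hW : IsMinimalPairFor vbar W a γ)
    (hWω : Extends (liftRF K) ω W) {h : K[X]} (hh : h ≠ 0)
    (hdeg : h.natDegree < (minpoly K a).natDegree) :
    ω (algebraMap K[X] (RatFunc K) h) = vbar (aeval a h) :=
  (hWω.val_algebraMap_polynomial h).trans (hW.val_map_eq_aeval hh hdeg)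

lemma IsMinimalPairFor.exists_val_eq_mem_valueSubgroup (hW : IsMinimalPairFor vbar W a γ)
    (hWω : Extends (liftRF K) ω W) {h : K[X]} (hh : h ≠ 0)
    (hdeg : h.natDegree < (minpoly K a).natDegree) :
    ∃ α ∈ valueSubgroup vbar (K⟮a⟯ : Set (AlgebraicClosure K)),
      ω (algebraMap K[X] (RatFunc K) h) = α := by
  have hne : aeval a h ≠ 0 := fun h0 =>
    hdeg.not_ge (natDegree_le_of_dvd (minpoly.dvd K a h0) hh)
  obtain ⟨α, hα⟩ := WithTop.ne_top_iff_exists.1 (vbar.ne_top_iff.2 hne)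
  exact ⟨α, AddSubgroup.subset_closure ⟨_, aeval_mem_adjoin_simple a h, hne, hα.symm⟩,
    by rw [hW.val_eq_aeval hWω hh hdeg, hα]⟩

lemma IsMinimalPairFor.exists_val_eq_add_nsmul (hW : IsMinimalPairFor vbar W a γ)
    (hWω : Extends (liftRF K) ω W) {γQ : Γ}
    (hQ : ω (algebraMap K[X] (RatFunc K) (minpoly K a)) = γQ)
    (hγQ : γQ ∉ baseValueDivHull vbar) {p : K[X]} (hp : p ≠ 0) :
    ∃ α ∈ valueSubgroup vbar (K⟮a⟯ : Set (AlgebraicClosure K)), ∃ j : ℕ,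
      ω (algebraMap K[X] (RatFunc K) p) = ((α + j • γQ : Γ) : WithTop Γ) := by
  induction hn : p.natDegree using Nat.strong_induction_on generalizing p with
  | _ n ih =>
  have hint : IsIntegral K a := Algebra.IsIntegral.isIntegral a
  have hmonic := minpoly.monic hint
  rcases lt_or_ge p.natDegree (minpoly K a).natDegree with hsmall | hlarge
  · obtain ⟨α, hα, hval⟩ := hW.exists_val_eq_mem_valueSubgroup hWω hp hsmall
    exact ⟨α, hα, 0, by rw [hval, zero_smul, add_zero]⟩
  have hq : p /ₘ minpoly K a ≠ 0 := by
    rw [Ne, divByMonic_eq_zero_iff hmonic]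
    exact fun h => hlarge.not_gt (natDegree_lt_natDegree hp h)
  have hqdeg := natDegree_divByMonic p hmonic
  obtain ⟨α, hα, j, hval⟩ := ih _ (by have := minpoly.natDegree_pos hint; omega) hq rfl
  have hQq : ω (algebraMap K[X] (RatFunc K) (minpoly K a * (p /ₘ minpoly K a))) =
      ((α + (j + 1) • γQ : Γ) : WithTop Γ) := by
    rw [map_mul, ω.map_mul, hQ, hval, ← WithTop.coe_add, succ_nsmul', add_left_comm]
  rw [← modByMonic_add_div p (minpoly K a)]
  by_cases hr : p %ₘ minpoly K a = 0
  · exact ⟨α, hα, j + 1, by rw [hr, zero_add, hQq]⟩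
  obtain ⟨α', hα', hr'⟩ := hW.exists_val_eq_mem_valueSubgroup hWω hr
    (natDegree_modByMonic_lt p hmonic (minpoly.ne_one K a))
  have hne : ω (algebraMap K[X] (RatFunc K) (p %ₘ minpoly K a)) ≠
      ω (algebraMap K[X] (RatFunc K) (minpoly K a * (p /ₘ minpoly K a))) := by
    -- `ω r ∈ T`, whereas `ω (Q q) ∈ T + (j + 1) γQ`
    rw [hr', hQq, Ne, WithTop.coe_inj]
    intro h
    have hT := valueSubgroup_le_baseValueDivHull vbar (K⟮a⟯ : Set (AlgebraicClosure K))
    exact (j.succ_ne_zero (eq_of_add_nsmul_eq_add_nsmul (m := 0) (hT hα') (hT hα) hγQ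
      (by rwa [zero_smul, add_zero])).1.symm)
  rw [map_add, ω.map_add_of_distinct_val hne, hr', hQq]
  rcases min_choice (α' : WithTop Γ) ((α + (j + 1) • γQ : Γ) : WithTop Γ) with h | h
  · exact ⟨α', hα', 0, by rw [h, zero_smul, add_zero]⟩
  · exact ⟨α, hα, j + 1, h⟩

lemma IsMinimalPairFor.valueSubgroup_univ_le (hW : IsMinimalPairFor vbar W a γ)
    (hWω : Extends (liftRF K) ω W) {γQ : Γ}
    (hQ : ω (algebraMap K[X] (RatFunc K) (minpoly K a)) = γQ)
    (hγQ : γQ ∉ baseValueDivHull vbar) :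
    valueSubgroup ω Set.univ ≤
      valueSubgroup vbar (K⟮a⟯ : Set (AlgebraicClosure K)) ⊔ AddSubgroup.closure {γQ} := by
  refine (AddSubgroup.closure_le _).2 ?_
  rintro δ ⟨f, -, hf, hδ⟩
  refine mem_of_val_polynomial_mem (fun p hp => ?_) hf hδ
  obtain ⟨α, hα, j, hval⟩ := hW.exists_val_eq_add_nsmul hWω hQ hγQ hp
  have hj : j • γQ ∈ AddSubgroup.closure {γQ} :=
    nsmul_mem (AddSubgroup.subset_closure (Set.mem_singleton γQ)) j
  exact ⟨_, add_mem (AddSubgroup.mem_sup_left hα) (AddSubgroup.mem_sup_right hj), hval⟩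

lemma IsMinimalPairFor.sup_le_valueSubgroup_univ (hW : IsMinimalPairFor vbar W a γ)
    (hWω : Extends (liftRF K) ω W) {γQ : Γ}
    (hQ : ω (algebraMap K[X] (RatFunc K) (minpoly K a)) = γQ) :
    valueSubgroup vbar (K⟮a⟯ : Set (AlgebraicClosure K)) ⊔ AddSubgroup.closure {γQ} ≤
      valueSubgroup ω Set.univ := by
  have hint : IsIntegral K a := Algebra.IsIntegral.isIntegral a
  refine sup_le ((AddSubgroup.closure_le _).2 ?_)
    ((AddSubgroup.closure_le _).2 (Set.singleton_subset_iff.2 (AddSubgroup.subset_closure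
      ⟨_, Set.mem_univ _, RatFunc.algebraMap_ne_zero (minpoly.ne_zero hint), hQ⟩)))
  rintro δ ⟨b, hb, hb0, hδ⟩
  obtain ⟨h, hdeg, rfl⟩ := exists_aeval_eq_of_mem_adjoin hint hb
  have hh : h ≠ 0 := by
    rintro rfl
    exact hb0 (map_zero _)
  exact AddSubgroup.subset_closure ⟨_, Set.mem_univ _, RatFunc.algebraMap_ne_zero hh,
    by rw [hW.val_eq_aeval hWω hh hdeg, hδ]⟩

variable (vbar) in
lemma valueSubgroup_inf_closure_eq_bot (S : Set (AlgebraicClosure K)) {γQ : Γ}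
    (hγQ : γQ ∉ baseValueDivHull vbar) :
    valueSubgroup vbar S ⊓ AddSubgroup.closure {γQ} = ⊥ := by
  refine eq_bot_iff.2 fun δ hδ => ?_
  obtain ⟨hδS, hδQ⟩ := AddSubgroup.mem_inf.1 hδ
  obtain ⟨k, rfl⟩ := AddSubgroup.mem_closure_singleton.1 hδQ
  rcases eq_or_ne k 0 with rfl | hk
  · rw [zero_smul]
    exact zero_mem _
  · exact absurd (mem_valueDivHull_of_zsmul_mem hk
      (valueSubgroup_le_baseValueDivHull vbar S hδS)) hγQ

lemma IsMonomialVal.exists_residue_adjoin (hmon : IsMonomialVal vbar W a γ)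
    (hγ : γ ∉ baseValueDivHull vbar) :
    ∀ f ∈ Set.range (liftRF K), 0 ≤ W f →
      ∃ g ∈ algebraMap (AlgebraicClosure K) (RatFunc (AlgebraicClosure K)) ''
          (K⟮a⟯ : Set (AlgebraicClosure K)), 0 ≤ W g ∧ 0 < W (f - g) := by
  rintro _ ⟨F, rfl⟩ hF
  rcases hF.lt_or_eq with hpos | hzero
  · exact ⟨0, ⟨0, zero_mem _, map_zero _⟩, by simp, by simpa⟩
  set P := F.num.map (algebraMap K (AlgebraicClosure K))
  set R := F.denom.map (algebraMap K (AlgebraicClosure K))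
  have hR : R ≠ 0 := Polynomial.map_ne_zero F.denom_ne_zero
  have hFR : liftRF K F * algebraMap _ _ R = algebraMap _ _ P := by
    have hF : F * algebraMap _ _ F.denom = algebraMap _ _ F.num := by
      nth_rw 1 [← RatFunc.num_div_denom F]
      exact div_mul_cancel₀ _ (RatFunc.algebraMap_ne_zero F.denom_ne_zero)
    rw [← liftRF_algebraMap, ← liftRF_algebraMap, ← map_mul, hF]
  obtain ⟨m, -, hc, hlt⟩ := hmon.exists_lt_val_sub_C_mul hγ hR
    (by rw [← hFR, W.map_mul, ← hzero, zero_add])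
  set c := (taylor a P).coeff m / (taylor a R).coeff m
  refine ⟨algebraMap _ _ c, ⟨c, div_mem (taylor_map_coeff_mem_adjoin a _ m)
    (taylor_map_coeff_mem_adjoin a _ m), rfl⟩, by rw [hmon.val_algebraMap, hc], ?_⟩
  have hdiff : (liftRF K F - algebraMap _ _ c) * algebraMap _ _ R =
      algebraMap _ _ (P - C c * R) := by
    rw [sub_mul, hFR, map_sub, map_mul, algebraMap_C_eq_algebraMap]
  rw [← hdiff, W.map_mul] at hlt
  refine (WithTop.add_lt_add_iff_right (W.ne_top_iff.2 (RatFunc.algebraMap_ne_zero hR))).1 ?_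
  rwa [zero_add]

lemma IsMinimalPairFor.exists_residue_liftRF (hW : IsMinimalPairFor vbar W a γ)
    (hγ : γ ∉ baseValueDivHull vbar) :
    ∀ g ∈ algebraMap (AlgebraicClosure K) (RatFunc (AlgebraicClosure K)) ''
        (K⟮a⟯ : Set (AlgebraicClosure K)), 0 ≤ W g →
      ∃ f ∈ Set.range (liftRF K), 0 ≤ W f ∧ 0 < W (g - f) := by
  rintro _ ⟨b, hb, rfl⟩ hb0
  rcases hb0.lt_or_eq with hpos | hzero
  · exact ⟨0, ⟨0, map_zero _⟩, by simp, by simpa⟩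
  rw [hW.1.val_algebraMap] at hzero
  obtain ⟨h, hdeg, rfl⟩ := exists_aeval_eq_of_mem_adjoin (Algebra.IsIntegral.isIntegral a) hb
  have hh : h ≠ 0 := by
    rintro rfl
    simp at hzero
  have hval := hW.val_map_eq_aeval hh hdeg
  -- compare `h` with `R = 1`, whose minimum sits at index `0`: the constant is then `h(a)`
  obtain ⟨m, hm, -, hlt⟩ := hW.1.exists_lt_val_sub_C_mul hγ one_ne_zero
    (by rw [hval, ← hzero, map_one, W.map_one])
  obtain rfl : m = 0 := by
    by_contra hm0
    rw [taylor_one, coeff_C, if_neg hm0] at hm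
    exact hm rfl
  rw [taylor_coeff_zero, taylor_one, coeff_C_zero, eval_map_algebraMap, div_one, mul_one,
    map_one, W.map_one] at hlt
  refine ⟨liftRF K (algebraMap _ _ h), ⟨_, rfl⟩, by rw [liftRF_algebraMap, hval, ← hzero], ?_⟩
  rwa [← W.map_neg, neg_sub, liftRF_algebraMap, ← algebraMap_C_eq_algebraMap, ← map_sub]

end MonomialExtension

/-- Remark: value group and residue field of a value transcendental
extension.  Let `ω` be a value transcendental extension of `ν` to `K(x)` with minimal
pair of definition `(a,γ)` (realized by `W = ω̄ = ν̄_{a,γ}`) and `Q = minpoly K a`.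
Then `ωK(x)` is the internal direct sum `ν̄K(a) ⊕ ℤ·ωQ` (a sup of subgroups of `Γ`
with trivial intersection), and the residue field of `(K(x),ω)` coincides with the
residue field of `(K(a),ν̄)` (both computed inside the residue field of `(K̄(x),ω̄)`). -/
theorem statement_7 {K : Type} [Field K] {Γ : Type} [AddCommGroup Γ] [LinearOrder Γ] [IsOrderedAddMonoid Γ]
    (vbar : AddValuation (AlgebraicClosure K) (WithTop Γ))
    (ω : AddValuation (RatFunc K) (WithTop Γ))
    (hvt : IsValueTranscendental (algebraMap K (RatFunc K)) ω)
    (a : AlgebraicClosure K) (γ : Γ)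
    (W : AddValuation (RatFunc (AlgebraicClosure K)) (WithTop Γ))
    (hW : IsMinimalPairFor vbar W a γ)
    (hWω : Extends (liftRF K) ω W) :
    ∃ γQ : Γ,
      ω (algebraMap (Polynomial K) (RatFunc K) (minpoly K a)) = (γQ : WithTop Γ) ∧
      valueSubgroup ω (Set.univ) =
        valueSubgroup vbar (IntermediateField.adjoin K {a} : Set (AlgebraicClosure K)) ⊔
          AddSubgroup.closure {γQ} ∧
      valueSubgroup vbar (IntermediateField.adjoin K {a} : Set (AlgebraicClosure K)) ⊓
          AddSubgroup.closure {γQ} = ⊥ ∧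
      SameResidues W (Set.range (liftRF K))
        ((algebraMap (AlgebraicClosure K) (RatFunc (AlgebraicClosure K))) ''
          (IntermediateField.adjoin K {a} : Set (AlgebraicClosure K))) := by
  have hγ := notMem_baseValueDivHull_of_isValueTranscendental hW.1 hWω hvt
  obtain ⟨γQ, hQ, hγQ⟩ := exists_val_minpoly_notMem hW.1 hWω hγ
  exact ⟨γQ, hQ,
    le_antisymm (hW.valueSubgroup_univ_le hWω hQ hγQ) (hW.sup_le_valueSubgroup_univ hWω hQ),
    valueSubgroup_inf_closure_eq_bot vbar _ hγQ,
    hW.1.exists_residue_adjoin hγ, hW.exists_residue_liftRF hγ⟩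

end VT
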